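/- arXiv:1702.00520 — 2 statements merged into one kernel-verified Lean document; each statement's English description precedes it below -/
import Mathlib

section
/- With the even function α(ξ) = m_φ(ξ/2 + π)Φ(ξ/2) from the Meyer wavelet construction built from Φ(ξ) = (1/√(2π))cos((π/2)g((3/(2π))|ξ|−1)) with g as in Example 3.1, the value ψ(0) = (2/√(2π)) ∫_{2π/3}^{8π/3} cos(ξ/2) α(ξ) dξ satisfies |ψ(0)| ≥ (√3/π) cos((π/2) g(1/2)) > 0; in particular ψ(0) ≠ 0. -/
/-!
Write `P = meyerProfile g = √(2π) Φ`. For `ξ ∈ [0, 4π)` the periodicity of `m_φ` gives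
`√(2π) cos(ξ/2) α(ξ) = P(ξ - 2π) P(ξ/2) cos(ξ/2)`. On `[2π/3, 4π/3]` the factor `P(ξ/2)` is `1`,
on `[4π/3, 8π/3]` the factor `P(ξ - 2π)` is `1`, and the substitutions `ξ = 2π(t+1)/3`,
`ξ = 4π(t+1)/3` give `ψ(0) = (2/3) ∫₀¹ k` with `k = c₁ sin θ - 2 c₂ cos θ`, where `θ = (π/2) g`,
`c₁(t) = cos(π(t+1)/3)` and `c₂(t) = cos(π(2t-1)/3) ≥ 0`.

Since `g(1 - t) = 1 - g(t)`, the reflection `t ↦ 1 - t` swaps `sin θ` and `cos θ`, negates `c₁`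
and fixes `c₂`. Hence `k(t) + k(1 - t) = c₁ (sin θ - cos θ) - 2 c₂ (sin θ + cos θ) ≤ |c₁| - 2 c₂`,
as `sin θ + cos θ ≥ 1` and `|sin θ - cos θ| ≤ 1` for `θ ∈ [0, π/2]`. Integrating this bound gives
`ψ(0) ≤ -(2/π)(√3 - 1)`, and `(2/π)(√3 - 1) > (√3/π) cos(π/4) = (√3/π) cos((π/2) g(1/2))`.
-/

open Real MeasureTheory intervalIntegral

lemma abs_sin_sub_cos_le_one {θ : ℝ} (h0 : 0 ≤ θ) (h1 : θ ≤ π / 2) :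
    |sin θ - cos θ| ≤ 1 := by
  have hs : 0 ≤ sin θ := sin_nonneg_of_nonneg_of_le_pi h0 (by linarith [pi_pos])
  have hc : 0 ≤ cos θ := cos_nonneg_of_mem_Icc ⟨by linarith [pi_pos], h1⟩
  exact abs_le.2 ⟨by linarith [cos_le_one θ], by linarith [sin_le_one θ]⟩

lemma one_le_sin_add_cos {θ : ℝ} (h0 : 0 ≤ θ) (h1 : θ ≤ π / 2) :
    1 ≤ sin θ + cos θ := by
  have hs : 0 ≤ sin θ := sin_nonneg_of_nonneg_of_le_pi h0 (by linarith [pi_pos])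
  have hc : 0 ≤ cos θ := cos_nonneg_of_mem_Icc ⟨by linarith [pi_pos], h1⟩
  nlinarith [sin_sq_add_cos_sq θ, mul_nonneg hs hc]

lemma mul_sin_sub_cos_sub_le {a b θ : ℝ} (ha : 0 ≤ a) (h0 : 0 ≤ θ) (h1 : θ ≤ π / 2) :
    b * (sin θ - cos θ) - 2 * a * (sin θ + cos θ) ≤ |b| - 2 * a := by
  have hb : b * (sin θ - cos θ) ≤ |b| :=
    calc b * (sin θ - cos θ) ≤ |b| * |sin θ - cos θ| := abs_mul b _ ▸ le_abs_self _
      _ ≤ |b| := mul_le_of_le_one_right (abs_nonneg b) (abs_sin_sub_cos_le_one h0 h1)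
  nlinarith [one_le_sin_add_cos h0 h1]

lemma two_mul_integral_eq_integral_add_comp_sub {f : ℝ → ℝ} {a b : ℝ}
    (hf : IntervalIntegrable f volume a b) :
    2 * ∫ x in a..b, f x = ∫ x in a..b, (f x + f (a + b - x)) := by
  have hrefl : IntervalIntegrable (fun x => f (a + b - x)) volume a b := by
    simpa using (hf.comp_sub_left (a + b)).symm
  rw [integral_add hf hrefl, integral_comp_sub_left]
  simp only [add_sub_cancel_right, add_sub_cancel_left]
  ring

lemma integral_cos_two_pi_div_three_mul_sub :
    ∫ t in (0 : ℝ)..1, cos (2 * π / 3 * t - π / 3) = 3 * √3 / (2 * π) := by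
  rw [integral_comp_mul_sub cos (by positivity : 2 * π / 3 ≠ 0), integral_cos,
    show 2 * π / 3 * 1 - π / 3 = π / 3 by ring,
    show 2 * π / 3 * 0 - π / 3 = -(π / 3) by ring, sin_neg, sin_pi_div_three, smul_eq_mul]
  field_simp
  ring

lemma integral_abs_cos_pi_div_three_mul_add :
    ∫ t in (0 : ℝ)..1, |cos (π / 3 * t + π / 3)| = 3 / π * (2 - √3) := by
  have hint : ∀ a b : ℝ, IntervalIntegrable (fun t => |cos (π / 3 * t + π / 3)|) volume a b :=
    fun a b => by apply Continuous.intervalIntegrable; fun_prop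
  have hπ := pi_pos
  have hpos : Set.EqOn (fun t => |cos (π / 3 * t + π / 3)|)
      (fun t => cos (π / 3 * t + π / 3)) (Set.uIcc 0 (1 / 2)) := by
    intro t ht
    rw [Set.uIcc_of_le (by norm_num)] at ht
    refine abs_of_nonneg (cos_nonneg_of_mem_Icc ⟨?_, ?_⟩) <;> nlinarith [ht.1, ht.2]
  have hneg : Set.EqOn (fun t => |cos (π / 3 * t + π / 3)|)
      (fun t => -cos (π / 3 * t + π / 3)) (Set.uIcc (1 / 2) 1) := by
    intro t ht
    rw [Set.uIcc_of_le (by norm_num)] at ht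
    refine abs_of_nonpos (cos_nonpos_of_pi_div_two_le_of_le ?_ ?_) <;> nlinarith [ht.1, ht.2]
  have hc : π / 3 ≠ 0 := by positivity
  rw [← integral_add_adjacent_intervals (hint 0 (1 / 2)) (hint (1 / 2) 1), integral_congr hpos,
    integral_congr hneg, intervalIntegral.integral_neg, integral_comp_mul_add cos hc,
    integral_comp_mul_add cos hc, integral_cos, integral_cos,
    show π / 3 * (1 / 2) + π / 3 = π / 2 by ring, show π / 3 * 0 + π / 3 = π / 3 by ring,
    show π / 3 * 1 + π / 3 = π - π / 3 by ring, sin_pi_sub, sin_pi_div_two, sin_pi_div_three,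
    smul_eq_mul, smul_eq_mul]
  field_simp
  ring

noncomputable def meyerProfile (g : ℝ → ℝ) (ξ : ℝ) : ℝ :=
  cos (π / 2 * g (3 / (2 * π) * |ξ| - 1))

noncomputable def meyerIntegrand (g : ℝ → ℝ) (ξ : ℝ) : ℝ :=
  meyerProfile g (ξ - 2 * π) * meyerProfile g (ξ / 2) * cos (ξ / 2)

section MeyerProfile

variable {g : ℝ → ℝ}

lemma continuous_meyerProfile (hgc : Continuous g) : Continuous (meyerProfile g) := by
  unfold meyerProfile; fun_prop

lemma continuous_meyerIntegrand (hgc : Continuous g) : Continuous (meyerIntegrand g) := by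
  have := continuous_meyerProfile hgc
  unfold meyerIntegrand; fun_prop

lemma meyerProfile_neg (ξ : ℝ) : meyerProfile g (-ξ) = meyerProfile g ξ := by
  rw [meyerProfile, meyerProfile, abs_neg]

lemma meyerProfile_eq_one (hg0 : ∀ x ≤ (0 : ℝ), g x = 0) {ξ : ℝ}
    (hξ : |ξ| ≤ 2 * π / 3) :
    meyerProfile g ξ = 1 := by
  have harg : 3 / (2 * π) * |ξ| - 1 ≤ 0 := by
    rw [sub_nonpos, div_mul_eq_mul_div, div_le_one (by positivity)]
    linarith
  rw [meyerProfile, hg0 _ harg, mul_zero, cos_zero]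

lemma meyerProfile_two_pi_div_three_mul {s : ℝ} (hs : 0 ≤ s) :
    meyerProfile g (2 * π / 3 * s) = cos (π / 2 * g (s - 1)) := by
  rw [meyerProfile, abs_of_nonneg (by positivity), ← mul_assoc,
    show 3 / (2 * π) * (2 * π / 3) = 1 by field_simp, one_mul]

lemma cos_pi_div_two_mul_one_sub (hgs : ∀ x, g x + g (1 - x) = 1) (t : ℝ) :
    cos (π / 2 * g (1 - t)) = sin (π / 2 * g t) := by
  rw [show π / 2 * g (1 - t) = π / 2 - π / 2 * g t by linear_combination π / 2 * hgs t,
    cos_pi_div_two_sub]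

lemma sin_pi_div_two_mul_one_sub (hgs : ∀ x, g x + g (1 - x) = 1) (t : ℝ) :
    sin (π / 2 * g (1 - t)) = cos (π / 2 * g t) := by
  rw [show π / 2 * g (1 - t) = π / 2 - π / 2 * g t by linear_combination π / 2 * hgs t,
    sin_pi_div_two_sub]

lemma apply_half_eq_half (hgs : ∀ x, g x + g (1 - x) = 1) : g (1 / 2) = 1 / 2 := by
  have h := hgs (1 / 2)
  rw [show (1 : ℝ) - 1 / 2 = 1 / 2 by norm_num] at h
  linarith

lemma meyerIntegrand_left (hg0 : ∀ x ≤ (0 : ℝ), g x = 0) (hgs : ∀ x, g x + g (1 - x) = 1)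
    {t : ℝ} (ht0 : 0 ≤ t) (ht1 : t ≤ 1) :
    meyerIntegrand g (2 * π / 3 * t + 2 * π / 3) =
      cos (π / 3 * t + π / 3) * sin (π / 2 * g t) := by
  have hπ := pi_pos
  have hhalf : (2 * π / 3 * t + 2 * π / 3) / 2 = π / 3 * t + π / 3 := by ring
  have hfirst : meyerProfile g (2 * π / 3 * t + 2 * π / 3 - 2 * π) = sin (π / 2 * g t) := by
    rw [show 2 * π / 3 * t + 2 * π / 3 - 2 * π = -(2 * π / 3 * (2 - t)) by ring,
      meyerProfile_neg, meyerProfile_two_pi_div_three_mul (by linarith),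
      show 2 - t - 1 = 1 - t by ring, cos_pi_div_two_mul_one_sub hgs]
  have hsecond : meyerProfile g (π / 3 * t + π / 3) = 1 :=
    meyerProfile_eq_one hg0 (abs_le.2 ⟨by nlinarith, by nlinarith⟩)
  rw [meyerIntegrand, hhalf, hfirst, hsecond]
  ring

lemma meyerIntegrand_right (hg0 : ∀ x ≤ (0 : ℝ), g x = 0) {t : ℝ} (ht0 : 0 ≤ t)
    (ht1 : t ≤ 1) :
    meyerIntegrand g (4 * π / 3 * t + 4 * π / 3) =
      -(cos (2 * π / 3 * t - π / 3) * cos (π / 2 * g t)) := by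
  have hπ := pi_pos
  have hfirst : meyerProfile g (4 * π / 3 * t + 4 * π / 3 - 2 * π) = 1 :=
    meyerProfile_eq_one hg0 (abs_le.2 ⟨by nlinarith, by nlinarith⟩)
  have hsecond : meyerProfile g ((4 * π / 3 * t + 4 * π / 3) / 2) = cos (π / 2 * g t) := by
    rw [show (4 * π / 3 * t + 4 * π / 3) / 2 = 2 * π / 3 * (t + 1) by ring,
      meyerProfile_two_pi_div_three_mul (by linarith), add_sub_cancel_right]
  have hcos : cos ((4 * π / 3 * t + 4 * π / 3) / 2) = -cos (2 * π / 3 * t - π / 3) := by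
    rw [show (4 * π / 3 * t + 4 * π / 3) / 2 = 2 * π / 3 * t - π / 3 + π by ring, cos_add_pi]
  rw [meyerIntegrand, hfirst, hsecond, hcos]
  ring

end MeyerProfile

noncomputable def reducedIntegrand (g : ℝ → ℝ) (t : ℝ) : ℝ :=
  cos (π / 3 * t + π / 3) * sin (π / 2 * g t) -
    2 * (cos (2 * π / 3 * t - π / 3) * cos (π / 2 * g t))

section Reduction

variable {g : ℝ → ℝ}

lemma integral_meyerIntegrand_left (hg0 : ∀ x ≤ (0 : ℝ), g x = 0)
    (hgs : ∀ x, g x + g (1 - x) = 1) :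
    ∫ ξ in (2 * π / 3)..(4 * π / 3), meyerIntegrand g ξ =
      2 * π / 3 * ∫ t in (0 : ℝ)..1, cos (π / 3 * t + π / 3) * sin (π / 2 * g t) := by
  have hcongr : Set.EqOn (fun t => meyerIntegrand g (2 * π / 3 * t + 2 * π / 3))
      (fun t => cos (π / 3 * t + π / 3) * sin (π / 2 * g t)) (Set.uIcc 0 1) := fun t ht => by
    rw [Set.uIcc_of_le zero_le_one] at ht
    exact meyerIntegrand_left hg0 hgs ht.1 ht.2
  have hc : 2 * π / 3 ≠ 0 := by positivity
  rw [← integral_congr hcongr, integral_comp_mul_add _ hc, smul_eq_mul, ← mul_assoc,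
    mul_inv_cancel₀ hc, one_mul]
  congr 1 <;> ring

lemma integral_meyerIntegrand_right (hg0 : ∀ x ≤ (0 : ℝ), g x = 0) :
    ∫ ξ in (4 * π / 3)..(8 * π / 3), meyerIntegrand g ξ =
      -(4 * π / 3 *
        ∫ t in (0 : ℝ)..1, cos (2 * π / 3 * t - π / 3) * cos (π / 2 * g t)) := by
  have hcongr : Set.EqOn (fun t => meyerIntegrand g (4 * π / 3 * t + 4 * π / 3))
      (fun t => -(cos (2 * π / 3 * t - π / 3) * cos (π / 2 * g t))) (Set.uIcc 0 1) :=
    fun t ht => by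
      rw [Set.uIcc_of_le zero_le_one] at ht
      exact meyerIntegrand_right hg0 ht.1 ht.2
  have hc : 4 * π / 3 ≠ 0 := by positivity
  rw [← mul_neg, ← intervalIntegral.integral_neg, ← integral_congr hcongr,
    integral_comp_mul_add _ hc, smul_eq_mul, ← mul_assoc, mul_inv_cancel₀ hc, one_mul]
  congr 1 <;> ring

lemma integral_meyerIntegrand (hgc : Continuous g) (hg0 : ∀ x ≤ (0 : ℝ), g x = 0)
    (hgs : ∀ x, g x + g (1 - x) = 1) :
    ∫ ξ in (2 * π / 3)..(8 * π / 3), meyerIntegrand g ξ =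
      2 * π / 3 * ∫ t in (0 : ℝ)..1, reducedIntegrand g t := by
  have hF := continuous_meyerIntegrand hgc
  have h1 : IntervalIntegrable (fun t => cos (π / 3 * t + π / 3) * sin (π / 2 * g t))
      volume 0 1 := by apply Continuous.intervalIntegrable; fun_prop
  have h2 : IntervalIntegrable (fun t => cos (2 * π / 3 * t - π / 3) * cos (π / 2 * g t))
      volume 0 1 := by apply Continuous.intervalIntegrable; fun_prop
  unfold reducedIntegrand
  rw [← integral_add_adjacent_intervals (hF.intervalIntegrable _ _) (hF.intervalIntegrable _ _),
    integral_meyerIntegrand_left hg0 hgs, integral_meyerIntegrand_right hg0,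
    integral_sub h1 (h2.const_mul 2), intervalIntegral.integral_const_mul]
  ring

lemma reducedIntegrand_add_one_sub_le (hgb : ∀ x, 0 ≤ g x ∧ g x ≤ 1)
    (hgs : ∀ x, g x + g (1 - x) = 1) {t : ℝ} (ht0 : 0 ≤ t) (ht1 : t ≤ 1) :
    reducedIntegrand g t + reducedIntegrand g (1 - t) ≤
      |cos (π / 3 * t + π / 3)| - 2 * cos (2 * π / 3 * t - π / 3) := by
  have hπ := pi_pos
  have hc1 : cos (π / 3 * (1 - t) + π / 3) = -cos (π / 3 * t + π / 3) := by
    rw [show π / 3 * (1 - t) + π / 3 = π - (π / 3 * t + π / 3) by ring, cos_pi_sub]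
  have hc2 : cos (2 * π / 3 * (1 - t) - π / 3) = cos (2 * π / 3 * t - π / 3) := by
    rw [show 2 * π / 3 * (1 - t) - π / 3 = -(2 * π / 3 * t - π / 3) by ring, cos_neg]
  have hc2_nonneg : 0 ≤ cos (2 * π / 3 * t - π / 3) :=
    cos_nonneg_of_mem_Icc ⟨by nlinarith, by nlinarith⟩
  have hθ0 : 0 ≤ π / 2 * g t := mul_nonneg (by positivity) (hgb t).1
  have hθ1 : π / 2 * g t ≤ π / 2 := mul_le_of_le_one_right (by positivity) (hgb t).2
  have key := mul_sin_sub_cos_sub_le (b := cos (π / 3 * t + π / 3)) hc2_nonneg hθ0 hθ1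
  rw [reducedIntegrand, reducedIntegrand, hc1, hc2, sin_pi_div_two_mul_one_sub hgs,
    cos_pi_div_two_mul_one_sub hgs]
  linarith

lemma integral_reducedIntegrand_le (hgc : Continuous g) (hgb : ∀ x, 0 ≤ g x ∧ g x ≤ 1)
    (hgs : ∀ x, g x + g (1 - x) = 1) :
    ∫ t in (0 : ℝ)..1, reducedIntegrand g t ≤ -(3 / π * (√3 - 1)) := by
  have hk : Continuous (reducedIntegrand g) := by unfold reducedIntegrand; fun_prop
  have h1 : IntervalIntegrable (fun t => |cos (π / 3 * t + π / 3)|) volume 0 1 := by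
    apply Continuous.intervalIntegrable; fun_prop
  have h2 : IntervalIntegrable (fun t => 2 * cos (2 * π / 3 * t - π / 3)) volume 0 1 := by
    apply Continuous.intervalIntegrable; fun_prop
  have hsym : IntervalIntegrable (fun t => reducedIntegrand g t + reducedIntegrand g (1 - t))
      volume 0 1 := by
    apply Continuous.intervalIntegrable; fun_prop
  have hbound := integral_mono_on zero_le_one hsym (h1.sub h2)
    (fun t ht => reducedIntegrand_add_one_sub_le hgb hgs ht.1 ht.2)
  rw [integral_sub h1 h2, intervalIntegral.integral_const_mul,
    integral_abs_cos_pi_div_three_mul_add, integral_cos_two_pi_div_three_mul_sub] at hbound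
  have hrefl := two_mul_integral_eq_integral_add_comp_sub (hk.intervalIntegrable 0 1)
  simp only [zero_add] at hrefl
  have hval : 3 / π * (2 - √3) - 2 * (3 * √3 / (2 * π)) = -(2 * (3 / π * (√3 - 1))) := by
    field_simp
    ring
  rw [← hrefl, hval] at hbound
  linarith

end Reduction

lemma cos_half_mul_α_eq {g Φ mφ α : ℝ → ℝ}
    (hΦ : ∀ ξ, Φ ξ = (√(2 * π))⁻¹ * meyerProfile g ξ)
    (hmper : ∀ ξ, mφ (ξ + 2 * π) = mφ ξ)
    (hmdef : ∀ ξ ∈ Set.Ico (-π) π, mφ ξ = √(2 * π) * Φ (2 * ξ))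
    (hα : ∀ ξ, α ξ = mφ (ξ / 2 + π) * Φ (ξ / 2)) {ξ : ℝ} (h0 : 0 ≤ ξ)
    (h1 : ξ < 4 * π) :
    cos (ξ / 2) * α ξ = (√(2 * π))⁻¹ * meyerIntegrand g ξ := by
  have hs : √(2 * π) ≠ 0 := by positivity
  have hm : mφ (ξ / 2 + π) = √(2 * π) * Φ (ξ - 2 * π) := by
    rw [show ξ / 2 + π = ξ / 2 - π + 2 * π by ring, hmper,
      hmdef _ ⟨by linarith, by linarith⟩, show 2 * (ξ / 2 - π) = ξ - 2 * π by ring]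
  rw [hα, hm, hΦ, hΦ, meyerIntegrand]
  field_simp

lemma integral_cos_half_mul_α {g Φ mφ α : ℝ → ℝ} (hgc : Continuous g)
    (hg0 : ∀ x ≤ (0 : ℝ), g x = 0) (hgs : ∀ x, g x + g (1 - x) = 1)
    (hΦ : ∀ ξ, Φ ξ = (√(2 * π))⁻¹ * meyerProfile g ξ)
    (hmper : ∀ ξ, mφ (ξ + 2 * π) = mφ ξ)
    (hmdef : ∀ ξ ∈ Set.Ico (-π) π, mφ ξ = √(2 * π) * Φ (2 * ξ))
    (hα : ∀ ξ, α ξ = mφ (ξ / 2 + π) * Φ (ξ / 2)) :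
    2 / √(2 * π) * ∫ ξ in (2 * π / 3)..(8 * π / 3), cos (ξ / 2) * α ξ =
      2 / 3 * ∫ t in (0 : ℝ)..1, reducedIntegrand g t := by
  have hπ := pi_pos
  have hcongr : Set.EqOn (fun ξ => cos (ξ / 2) * α ξ)
      (fun ξ => (√(2 * π))⁻¹ * meyerIntegrand g ξ) (Set.uIcc (2 * π / 3) (8 * π / 3)) :=
    fun ξ hξ => by
      rw [Set.uIcc_of_le (by linarith)] at hξ
      exact cos_half_mul_α_eq hΦ hmper hmdef hα (by linarith [hξ.1]) (by linarith [hξ.2])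
  rw [integral_congr hcongr, intervalIntegral.integral_const_mul,
    integral_meyerIntegrand hgc hg0 hgs]
  field_simp
  rw [sq_sqrt (by positivity)]

lemma sqrt_three_mul_sqrt_two_div_two_le : √3 * (√2 / 2) ≤ 2 * (√3 - 1) := by
  have h2 : √2 ≤ 3 / 2 := (sqrt_le_left (by norm_num)).2 (by norm_num)
  have h3 : 8 / 5 ≤ √3 := (le_sqrt' (by norm_num)).2 (by norm_num)
  nlinarith

theorem stmt_7_general (g Φ mφ α : ℝ → ℝ) (hgc : Continuous g)
    (hg0 : ∀ x ≤ (0 : ℝ), g x = 0)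
    (hgb : ∀ x : ℝ, 0 ≤ g x ∧ g x ≤ 1)
    (hgs : ∀ x : ℝ, g x + g (1 - x) = 1)
    (hΦ : ∀ ξ : ℝ, Φ ξ = (Real.sqrt (2 * π))⁻¹ *
      Real.cos (π / 2 * g (3 / (2 * π) * |ξ| - 1)))
    (hmper : ∀ ξ : ℝ, mφ (ξ + 2 * π) = mφ ξ)
    (hmdef : ∀ ξ ∈ Set.Ico (-π) π, mφ ξ = Real.sqrt (2 * π) * Φ (2 * ξ))
    (hα : ∀ ξ : ℝ, α ξ = mφ (ξ / 2 + π) * Φ (ξ / 2))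
    (ψ0 : ℝ)
    (hψ0 : ψ0 = 2 / Real.sqrt (2 * π) *
      ∫ ξ in (2 * π / 3)..(8 * π / 3), Real.cos (ξ / 2) * α ξ) :
    Real.sqrt 3 / π * Real.cos (π / 2 * g (1 / 2)) ≤ |ψ0| ∧
      0 < Real.sqrt 3 / π * Real.cos (π / 2 * g (1 / 2)) ∧ ψ0 ≠ 0 := by
  have hψ : ψ0 = 2 / 3 * ∫ t in (0 : ℝ)..1, reducedIntegrand g t :=
    hψ0.trans (integral_cos_half_mul_α hgc hg0 hgs hΦ hmper hmdef hα)
  have hcos : cos (π / 2 * g (1 / 2)) = √2 / 2 := by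
    rw [apply_half_eq_half hgs, show π / 2 * (1 / 2) = π / 4 by ring, cos_pi_div_four]
  have hpos : 0 < √3 / π * (√2 / 2) := by positivity
  have hlower : √3 / π * (√2 / 2) ≤ |ψ0| :=
    calc √3 / π * (√2 / 2) ≤ 2 * (√3 - 1) / π := by
          rw [div_mul_eq_mul_div]
          exact div_le_div_of_nonneg_right sqrt_three_mul_sqrt_two_div_two_le pi_pos.le
      _ ≤ -ψ0 := by
          have := integral_reducedIntegrand_le hgc hgb hgs
          rw [hψ]; field_simp at this ⊢; linarith
      _ ≤ |ψ0| := neg_le_abs ψ0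
  rw [hcos]
  exact ⟨hlower, hpos, fun h => by rw [h, abs_zero] at hlower; linarith⟩

theorem stmt_7 (g Φ mφ α : ℝ → ℝ) (hgc : Continuous g)
    (hg0 : ∀ x ≤ (0 : ℝ), g x = 0) (hg1 : ∀ x : ℝ, 1 ≤ x → g x = 1)
    (hgb : ∀ x : ℝ, 0 ≤ g x ∧ g x ≤ 1)
    (hgs : ∀ x : ℝ, g x + g (1 - x) = 1)
    (hΦ : ∀ ξ : ℝ, Φ ξ = (Real.sqrt (2 * π))⁻¹ *
      Real.cos (π / 2 * g (3 / (2 * π) * |ξ| - 1)))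
    (hmper : ∀ ξ : ℝ, mφ (ξ + 2 * π) = mφ ξ)
    (hmdef : ∀ ξ ∈ Set.Ico (-π) π, mφ ξ = Real.sqrt (2 * π) * Φ (2 * ξ))
    (hα : ∀ ξ : ℝ, α ξ = mφ (ξ / 2 + π) * Φ (ξ / 2))
    (ψ0 : ℝ)
    (hψ0 : ψ0 = 2 / Real.sqrt (2 * π) *
      ∫ ξ in (2 * π / 3)..(8 * π / 3), Real.cos (ξ / 2) * α ξ) :
    Real.sqrt 3 / π * Real.cos (π / 2 * g (1 / 2)) ≤ |ψ0| ∧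
      0 < Real.sqrt 3 / π * Real.cos (π / 2 * g (1 / 2)) ∧ ψ0 ≠ 0 :=
  stmt_7_general g Φ mφ α hgc hg0 hgb hgs hΦ hmper hmdef hα ψ0 hψ0
end

section
/- Let ψ⁰ : ℝ^D → ℝ be integrable with ∑_{k∈ℤ^D}|ψ⁰(x−k)| ≤ C for all x. For j ∈ ℤ, k ∈ ℤ^D set ψ⁰_{j,k}(x) = 2^{Dj/2}ψ⁰(2^j x − k), and for f ∈ L¹(ℝ^D) define P_j f = ∑_{k∈ℤ^D} ⟨f, ψ⁰_{j,k}⟩ ψ⁰_{j,k}. Then ‖P_j f‖_{L¹} ≤ C² ‖f‖_{L¹} for every j ∈ ℤ, with constant independent of j. -/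
/-!
Write `P f = ∑ₖ ⟨f, φₖ⟩ φₖ` with `φₖ x = c ψ(a x - k)`, `a = 2^j`, `c = 2^(Dj/2)`. Bounding
`|⟨f, φₖ⟩| ≤ ∫ |f| |φₖ|` and exchanging sum and integrals gives
`‖P f‖₁ ≤ supₖ ‖φₖ‖₁ · ‖∑ₖ |φₖ|‖_∞ · ‖f‖₁`. Here `‖φₖ‖₁ = c⁻¹ ‖ψ‖₁` and `∑ₖ |φₖ(y)| = c S(a y)`
with `S x = ∑ₖ |ψ(x - k)|`, so the factors `c` cancel and the bound is `‖ψ‖₁ · C · ‖f‖₁`;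
finally `‖ψ‖₁ = ∫_{[0,1)^D} S ≤ C`.

The hypothesis `S ≤ C` is about a real `tsum`, which is `0` where the series diverges. It still
controls `S` almost everywhere: `S` is `ℤ^D`-periodic with finite integral over the unit cube,
so it is finite almost everywhere.
-/

open MeasureTheory Set Submodule Module
open scoped ENNReal

section FrameOperator

variable {α ι : Type*} [MeasurableSpace α] [Countable ι] {μ : Measure α}

noncomputable def frameOperator (μ : Measure α) (φ : ι → α → ℝ) (f : α → ℝ) (x : α) : ℝ :=
  ∑' k, (∫ y, f y * φ k y ∂μ) * φ k x

theorem lintegral_enorm_frameOperator_le {φ : ι → α → ℝ} (hφ : ∀ k, AEMeasurable (φ k) μ)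
    {f : α → ℝ} (hf : AEMeasurable f μ) {A B : ℝ≥0∞}
    (hA : ∀ k, ∫⁻ x, ‖φ k x‖ₑ ∂μ ≤ A) (hB : ∀ᵐ y ∂μ, ∑' k, ‖φ k y‖ₑ ≤ B) :
    ∫⁻ x, ‖frameOperator μ φ f x‖ₑ ∂μ ≤ A * B * ∫⁻ x, ‖f x‖ₑ ∂μ :=
  calc ∫⁻ x, ‖frameOperator μ φ f x‖ₑ ∂μ
      ≤ ∫⁻ x, ∑' k, ‖∫ y, f y * φ k y ∂μ‖ₑ * ‖φ k x‖ₑ ∂μ := by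
        refine lintegral_mono fun x => enorm_tsum_le_tsum_enorm.trans_eq ?_
        simp only [enorm_mul]
    _ = ∑' k, ‖∫ y, f y * φ k y ∂μ‖ₑ * ∫⁻ x, ‖φ k x‖ₑ ∂μ := by
        rw [lintegral_tsum fun k => (hφ k).enorm.const_mul _]
        simp_rw [lintegral_const_mul' _ _ enorm_ne_top]
    _ ≤ ∑' k, (∫⁻ y, ‖f y‖ₑ * ‖φ k y‖ₑ ∂μ) * A := by
        gcongr with k
        · simpa only [enorm_mul] using enorm_integral_le_lintegral_enorm (fun y => f y * φ k y)
        · exact hA k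
    _ = (∫⁻ y, ‖f y‖ₑ * ∑' k, ‖φ k y‖ₑ ∂μ) * A := by
        have hterm (k : ι) : AEMeasurable (fun y => ‖f y‖ₑ * ‖φ k y‖ₑ) μ :=
          hf.enorm.mul (hφ k).enorm
        rw [ENNReal.tsum_mul_right, ← lintegral_tsum hterm]
        simp_rw [ENNReal.tsum_mul_left]
    _ ≤ (∫⁻ y, ‖f y‖ₑ * B ∂μ) * A := by
        gcongr 1
        exact lintegral_mono_ae (hB.mono fun y hy => mul_le_mul_right hy _)
    _ = A * B * ∫⁻ x, ‖f x‖ₑ ∂μ := by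
        rw [lintegral_mul_const'' _ hf.enorm]
        ring

end FrameOperator

section

variable {α : Type*} [MeasurableSpace α] {μ : Measure α}

theorem integral_abs_le_of_lintegral_enorm_le {F : α → ℝ} {M : ℝ} (hM : 0 ≤ M)
    (h : ∫⁻ x, ‖F x‖ₑ ∂μ ≤ ENNReal.ofReal M) : ∫ x, |F x| ∂μ ≤ M := by
  by_cases hF : Integrable (fun x => |F x|) μ
  · rw [integral_eq_lintegral_of_nonneg_ae (ae_of_all _ fun _ => abs_nonneg _)
      hF.aestronglyMeasurable]
    simp_rw [← Real.enorm_eq_ofReal_abs]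
    exact ENNReal.toReal_le_of_le_ofReal hM h
  · rw [integral_undef hF]
    exact hM

end

theorem lintegral_comp_smul_sub {E : Type*} [NormedAddCommGroup E] [NormedSpace ℝ E]
    [MeasurableSpace E] [BorelSpace E] [FiniteDimensional ℝ E] (μ : Measure E)
    [μ.IsAddHaarMeasure] (g : E → ℝ≥0∞) {r : ℝ} (hr : r ≠ 0) (v : E) :
    ∫⁻ x, g (r • x - v) ∂μ = ENNReal.ofReal |(r ^ finrank ℝ E)⁻¹| * ∫⁻ x, g x ∂μ := by
  calc ∫⁻ x, g (r • x - v) ∂μ = ∫⁻ x, g (x - v) ∂(Measure.map (r • ·) μ) :=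
        (lintegral_map_equiv (fun x => g (x - v)) (MeasurableEquiv.smul₀ r hr)).symm
    _ = _ := by
        rw [Measure.map_addHaar_smul μ hr, lintegral_smul_measure, lintegral_sub_right_eq_self,
          smul_eq_mul]

section Periodization

variable {ι : Type*}

noncomputable def periodization (g : (ι → ℝ) → ℝ≥0∞) (x : ι → ℝ) : ℝ≥0∞ :=
  ∑' k : ι → ℤ, g (x - fun i => (k i : ℝ))

theorem periodization_add_intCast (g : (ι → ℝ) → ℝ≥0∞) (x : ι → ℝ) (m : ι → ℤ) :
    periodization g (x + fun i => (m i : ℝ)) = periodization g x := by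
  rw [periodization, ← (Equiv.addRight m).tsum_eq]
  refine tsum_congr fun k => congrArg g (funext fun i => ?_)
  simp only [Equiv.coe_addRight, Pi.add_apply, Int.cast_add, Pi.sub_apply]
  ring

variable [Fintype ι]

theorem AEMeasurable.comp_sub_intCast {β : Type*} [MeasurableSpace β] {g : (ι → ℝ) → β}
    (hg : AEMeasurable g) (k : ι → ℤ) :
    AEMeasurable (fun x => g (x - fun i => (k i : ℝ))) :=
  hg.comp_quasiMeasurePreserving (measurePreserving_sub_right volume _).quasiMeasurePreserving

abbrev intLattice (ι : Type*) [Fintype ι] : AddSubgroup (ι → ℝ) :=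
  (span ℤ (range (Pi.basisFun ℝ ι))).toAddSubgroup

noncomputable def intLatticeEquiv : intLattice ι ≃ (ι → ℤ) :=
  ((Pi.basisFun ℝ ι).restrictScalars ℤ).equivFun.toEquiv

theorem coe_intLatticeEquiv_symm (k : ι → ℤ) :
    ((intLatticeEquiv.symm k : intLattice ι) : ι → ℝ) = fun i => (k i : ℝ) := by
  obtain ⟨v, rfl⟩ := intLatticeEquiv.surjective k
  ext i
  simpa [intLatticeEquiv] using ((Pi.basisFun ℝ ι).restrictScalars_repr_apply ℤ v i).symm

instance : Countable (intLattice ι) := Countable.of_equiv _ intLatticeEquiv.symm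

theorem isAddFundamentalDomain_unitCube :
    IsAddFundamentalDomain (intLattice ι) (univ.pi fun _ : ι => Ico (0 : ℝ) 1) volume := by
  simpa only [ZSpan.fundamentalDomain_pi_basisFun] using
    ZSpan.isAddFundamentalDomain' (Pi.basisFun ℝ ι) volume

theorem setLIntegral_unitCube_periodization {g : (ι → ℝ) → ℝ≥0∞} (hg : AEMeasurable g) :
    ∫⁻ x in univ.pi (fun _ => Ico (0 : ℝ) 1), periodization g x = ∫⁻ x, g x := by
  unfold periodization
  rw [(isAddFundamentalDomain_unitCube (ι := ι)).lintegral_eq_tsum',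
    lintegral_tsum fun k => (hg.comp_sub_intCast k).restrict,
    ← intLatticeEquiv.symm.tsum_eq]
  refine tsum_congr fun k => lintegral_congr fun x => ?_
  rw [AddSubgroup.vadd_def, vadd_eq_add, AddSubgroup.coe_neg, coe_intLatticeEquiv_symm,
    neg_add_eq_sub]

theorem periodization_vadd (g : (ι → ℝ) → ℝ≥0∞) (v : intLattice ι) (x : ι → ℝ) :
    periodization g (v +ᵥ x) = periodization g x := by
  obtain ⟨k, rfl⟩ := intLatticeEquiv.symm.surjective v
  rw [AddSubgroup.vadd_def, vadd_eq_add, coe_intLatticeEquiv_symm, add_comm,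
    periodization_add_intCast]

theorem ae_periodization_lt_top {g : (ι → ℝ) → ℝ≥0∞} (hg : AEMeasurable g)
    (hfin : ∫⁻ x, g x ≠ ∞) : ∀ᵐ x, periodization g x < ∞ := by
  have hcube : ∀ᵐ x ∂volume.restrict (univ.pi fun _ : ι => Ico (0 : ℝ) 1),
      periodization g x < ∞ :=
    ae_lt_top' (AEMeasurable.tsum fun k => (hg.comp_sub_intCast k).restrict)
      (by rwa [setLIntegral_unitCube_periodization hg])
  rw [ae_iff] at hcube ⊢
  rw [Measure.restrict_apply' (MeasurableSet.univ_pi fun _ => measurableSet_Ico)] at hcube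
  refine isAddFundamentalDomain_unitCube.measure_zero_of_invariant _ (fun v => ?_) hcube
  ext x
  simp [mem_vadd_set_iff_neg_vadd_mem, periodization_vadd]

theorem lintegral_le_of_ae_periodization_le {g : (ι → ℝ) → ℝ≥0∞} (hg : AEMeasurable g)
    {M : ℝ≥0∞} (hM : ∀ᵐ x, periodization g x ≤ M) : ∫⁻ x, g x ≤ M :=
  calc ∫⁻ x, g x = ∫⁻ x in univ.pi (fun _ => Ico (0 : ℝ) 1), periodization g x :=
        (setLIntegral_unitCube_periodization hg).symm
    _ ≤ ∫⁻ _ in univ.pi (fun _ => Ico (0 : ℝ) 1), M := lintegral_mono_ae (ae_restrict_of_ae hM)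
    _ = M := by simp [Real.volume_pi_Ico]

theorem ae_periodization_enorm_le {ψ : (ι → ℝ) → ℝ} {C : ℝ} (hψ : Integrable ψ)
    (hper : ∀ x, ∑' k : ι → ℤ, |ψ (x - fun i => (k i : ℝ))| ≤ C) :
    ∀ᵐ x, periodization (‖ψ ·‖ₑ) x ≤ ENNReal.ofReal C := by
  filter_upwards [ae_periodization_lt_top hψ.aemeasurable.enorm hψ.hasFiniteIntegral.ne]
    with x hx
  have hsum : Summable fun k : ι → ℤ => |ψ (x - fun i => (k i : ℝ))| :=
    Summable.of_enorm <| by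
      simpa only [periodization, Real.enorm_eq_ofReal_abs, abs_abs] using hx.ne
  calc periodization (‖ψ ·‖ₑ) x
      = ENNReal.ofReal (∑' k : ι → ℤ, |ψ (x - fun i => (k i : ℝ))|) := by
        simp only [periodization, Real.enorm_eq_ofReal_abs,
          ENNReal.ofReal_tsum_of_nonneg (fun _ => abs_nonneg _) hsum]
    _ ≤ ENNReal.ofReal C := ENNReal.ofReal_le_ofReal (hper x)

end Periodization

theorem lintegral_enorm_frameOperator_dilate_le {ι : Type*} [Fintype ι] {ψ : (ι → ℝ) → ℝ}
    (hψ : AEMeasurable ψ) {M : ℝ≥0∞} (hM : ∀ᵐ x, periodization (‖ψ ·‖ₑ) x ≤ M) {a c : ℝ}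
    (ha : a ≠ 0) (hc : c ^ 2 = |a| ^ Fintype.card ι) {f : (ι → ℝ) → ℝ} (hf : AEMeasurable f) :
    ∫⁻ x, ‖frameOperator volume
        (fun (k : ι → ℤ) x => c * ψ (a • x - fun i => (k i : ℝ))) f x‖ₑ ≤
      M * M * ∫⁻ x, ‖f x‖ₑ := by
  have hc0 : ‖c‖ₑ ≠ 0 := by
    rw [enorm_ne_zero]
    rintro rfl
    exact pow_ne_zero _ (abs_ne_zero.2 ha) (by simpa using hc.symm)
  have hnormalized : ‖c‖ₑ * ENNReal.ofReal |(a ^ finrank ℝ (ι → ℝ))⁻¹| = ‖c‖ₑ⁻¹ := by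
    have hc' : 0 < |c| := by simpa using hc0
    rw [Real.enorm_eq_ofReal_abs, ← ENNReal.ofReal_mul (abs_nonneg c),
      ← ENNReal.ofReal_inv_of_pos hc', Module.finrank_fintype_fun_eq_card, abs_inv, abs_pow,
      ← hc, ← sq_abs]
    congr 1
    field_simp
  have hmeas (k : ι → ℤ) : AEMeasurable (fun x => c * ψ (a • x - fun i => (k i : ℝ))) :=
    (hψ.comp_quasiMeasurePreserving
      ((measurePreserving_sub_right volume _).quasiMeasurePreserving.comp
        (Measure.quasiMeasurePreserving_smul volume ha))).const_mul c
  have hA (k : ι → ℤ) : ∫⁻ x, ‖c * ψ (a • x - fun i => (k i : ℝ))‖ₑ ≤ ‖c‖ₑ⁻¹ * M := by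
    simp_rw [enorm_mul]
    rw [lintegral_const_mul' _ _ enorm_ne_top,
      lintegral_comp_smul_sub volume (‖ψ ·‖ₑ) ha, ← mul_assoc, hnormalized]
    exact mul_le_mul_right (lintegral_le_of_ae_periodization_le hψ.enorm hM) _
  have hB : ∀ᵐ y, ∑' k : ι → ℤ, ‖c * ψ (a • y - fun i => (k i : ℝ))‖ₑ ≤ ‖c‖ₑ * M := by
    filter_upwards [(Measure.quasiMeasurePreserving_smul volume ha).ae hM] with y hy
    simp_rw [enorm_mul, ENNReal.tsum_mul_left]
    exact mul_le_mul_right hy _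
  calc _ ≤ ‖c‖ₑ⁻¹ * M * (‖c‖ₑ * M) * ∫⁻ x, ‖f x‖ₑ :=
        lintegral_enorm_frameOperator_le hmeas hf hA hB
    _ = M * M * ∫⁻ x, ‖f x‖ₑ := by
        rw [mul_mul_mul_comm, ENNReal.inv_mul_cancel hc0 enorm_ne_top, one_mul]

theorem stmt_12_general (D : ℕ) (ψ : (Fin D → ℝ) → ℝ) (C : ℝ)
    (hint : Integrable ψ)
    (hper : ∀ x : Fin D → ℝ, (∑' k : Fin D → ℤ, |ψ (x - fun i => (k i : ℝ))|) ≤ C)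
    (j : ℤ) (ψjk : (Fin D → ℤ) → (Fin D → ℝ) → ℝ)
    (hψjk : ∀ (k : Fin D → ℤ) (x : Fin D → ℝ),
      ψjk k x = (2 : ℝ) ^ ((D : ℝ) * (j : ℝ) / 2) * ψ (fun i => (2 : ℝ) ^ j * x i - k i))
    (f : (Fin D → ℝ) → ℝ) (hf : Integrable f) :
    (∫ x : Fin D → ℝ,
        |∑' k : Fin D → ℤ, (∫ y : Fin D → ℝ, f y * ψjk k y) * ψjk k x|) ≤
      C ^ 2 * ∫ x : Fin D → ℝ, |f x| := by
  have hC : 0 ≤ C := (tsum_nonneg fun _ => abs_nonneg _).trans (hper 0)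
  have hfamily : ψjk = fun k x =>
      (2 : ℝ) ^ ((D : ℝ) * (j : ℝ) / 2) * ψ ((2 : ℝ) ^ j • x - fun i => (k i : ℝ)) := by
    ext k x
    exact hψjk k x
  have hnormalized :
      ((2 : ℝ) ^ ((D : ℝ) * (j : ℝ) / 2)) ^ 2 = |(2 : ℝ) ^ j| ^ Fintype.card (Fin D) := by
    rw [Fintype.card_fin, abs_of_pos (zpow_pos two_pos j), ← zpow_natCast ((2 : ℝ) ^ j) D,
      ← zpow_mul, ← Real.rpow_intCast, ← Real.rpow_natCast, ← Real.rpow_mul zero_le_two]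
    push_cast
    ring_nf
  refine integral_abs_le_of_lintegral_enorm_le (by positivity) ?_
  calc _ ≤ ENNReal.ofReal C * ENNReal.ofReal C * ∫⁻ x, ‖f x‖ₑ := hfamily ▸
        lintegral_enorm_frameOperator_dilate_le hint.aemeasurable
          (ae_periodization_enorm_le hint hper) (zpow_ne_zero j two_ne_zero) hnormalized
          hf.aemeasurable
    _ = ENNReal.ofReal (C ^ 2 * ∫ x, |f x|) := by
        rw [← ofReal_integral_norm_eq_lintegral_enorm hf, ← ENNReal.ofReal_mul hC,
          ← ENNReal.ofReal_mul (by positivity), sq]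
        simp only [Real.norm_eq_abs]

theorem stmt_12 (D : ℕ) (hD : 1 ≤ D) (ψ : (Fin D → ℝ) → ℝ) (C : ℝ)
    (hint : Integrable ψ)
    (hper : ∀ x : Fin D → ℝ, (∑' k : Fin D → ℤ, |ψ (x - fun i => (k i : ℝ))|) ≤ C)
    (j : ℤ) (ψjk : (Fin D → ℤ) → (Fin D → ℝ) → ℝ)
    (hψjk : ∀ (k : Fin D → ℤ) (x : Fin D → ℝ),
      ψjk k x = (2 : ℝ) ^ ((D : ℝ) * (j : ℝ) / 2) * ψ (fun i => (2 : ℝ) ^ j * x i - k i))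
    (f : (Fin D → ℝ) → ℝ) (hf : Integrable f) :
    (∫ x : Fin D → ℝ,
        |∑' k : Fin D → ℤ, (∫ y : Fin D → ℝ, f y * ψjk k y) * ψjk k x|) ≤
      C ^ 2 * ∫ x : Fin D → ℝ, |f x| :=
  stmt_12_general D ψ C hint hper j ψjk hψjk f hf
end
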